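/- arXiv:1006.1915 — 3 statements merged into one kernel-verified Lean document; each statement's English description precedes it below -/
import Mathlib

section
/- For n = (3,4,5), the kernel of the ℂ-algebra homomorphism φ : ℂ[x,y,z] → ℂ[t] with φ(x) = t³, φ(y) = t⁴, φ(z) = t⁵ is the ideal I = (y² − xz, x³ − yz, z² − x²y). -/
/-!
Modulo the three binomials every monomial `xᵃ yᵇ zᶜ` reduces to the form `A(x) + B(x) y + C(x) z`:
`y² ≡ xz`, `yz ≡ x³` and `z² ≡ x²y` remove all products of `y` and `z`. Under `x, y, z ↦ t³, t⁴, t⁵`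
such a normal form maps to `A(t³) + t⁴ B(t³) + t⁵ C(t³)`, whose three summands live in the
pairwise disjoint exponent classes `0, 1, 2 (mod 3)`; so it maps to zero only if it is zero.
-/

open MvPolynomial

namespace Polynomial

variable {R : Type*} [CommSemiring R]

theorem aeval_X_pow_eq_expand (p : ℕ) (f : R[X]) : aeval (X ^ p) f = expand R p f := rfl

theorem coeff_X_pow_mul_expand_mul_add {p i j : ℕ} (hi : i < p) (hj : j < p) (f : R[X])
    (k : ℕ) : (X ^ i * expand R p f).coeff (p * k + j) = if i = j then f.coeff k else 0 := by
  rw [coeff_X_pow_mul', coeff_expand (by omega)]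
  by_cases hij : i = j
  · subst hij
    simp [Nat.mul_div_cancel_left k (show 0 < p by omega)]
  · rw [if_neg hij]
    split_ifs with hle hdvd <;> try rfl
    obtain ⟨m, hm⟩ := hdvd
    have hmod : (p * m + i) % p = (p * k + j) % p := by rw [← hm, Nat.sub_add_cancel hle]
    simp [Nat.mod_eq_of_lt hi, Nat.mod_eq_of_lt hj] at hmod
    exact absurd hmod hij

theorem eq_zero_of_sum_X_pow_mul_expand_eq_zero {p : ℕ} {f : Fin p → R[X]}
    (h : ∑ i : Fin p, X ^ (i : ℕ) * expand R p (f i) = 0) : f = 0 := by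
  ext i k
  have hcoeff := congrArg (coeff · (p * k + i)) h
  simpa [finsetSum_coeff, coeff_X_pow_mul_expand_mul_add, Fin.val_inj] using hcoeff

end Polynomial

section Relations

variable {R S : Type*} [CommSemiring R] [CommRing S] [Algebra R S]

theorem exists_aeval_eq_of_relations (g : Fin 3 → S)
    (h₁ : g 1 ^ 2 = g 0 * g 2) (h₂ : g 0 ^ 3 = g 1 * g 2) (h₃ : g 2 ^ 2 = g 0 ^ 2 * g 1)
    (p : MvPolynomial (Fin 3) R) :
    ∃ A B C : Polynomial R, aeval g p =
      Polynomial.aeval (g 0) A + Polynomial.aeval (g 0) B * g 1 +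
        Polynomial.aeval (g 0) C * g 2 := by
  induction p using MvPolynomial.induction_on with
  | C a => exact ⟨Polynomial.C a, 0, 0, by simp⟩
  | add p q hp hq =>
    obtain ⟨A, B, C, hp⟩ := hp
    obtain ⟨A', B', C', hq⟩ := hq
    exact ⟨A + A', B + B', C + C', by rw [map_add, hp, hq]; simp only [map_add]; ring⟩
  | mul_X p i hp =>
    obtain ⟨A, B, C, hp⟩ := hp
    rw [map_mul, aeval_X, hp]
    fin_cases i <;> simp only [Fin.zero_eta, Fin.mk_one, Fin.reduceFinMk]
    · refine ⟨A * Polynomial.X, B * Polynomial.X, C * Polynomial.X, ?_⟩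
      simp only [map_mul, Polynomial.aeval_X]
      ring
    · refine ⟨C * Polynomial.X ^ 3, A, B * Polynomial.X, ?_⟩
      simp only [map_mul, map_pow, Polynomial.aeval_X]
      linear_combination Polynomial.aeval (g 0) B * h₁ - Polynomial.aeval (g 0) C * h₂
    · refine ⟨B * Polynomial.X ^ 3, C * Polynomial.X ^ 2, A, ?_⟩
      simp only [map_mul, map_pow, Polynomial.aeval_X]
      linear_combination Polynomial.aeval (g 0) C * h₃ - Polynomial.aeval (g 0) B * h₂

end Relations

section NormalForm

variable {R : Type*} [CommRing R]
open Polynomial (toMvPolynomial)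

theorem exists_sub_mem_of_relations (I : Ideal (MvPolynomial (Fin 3) R))
    (h₁ : X 1 ^ 2 - X 0 * X 2 ∈ I) (h₂ : X 0 ^ 3 - X 1 * X 2 ∈ I)
    (h₃ : X 2 ^ 2 - X 0 ^ 2 * X 1 ∈ I) (p : MvPolynomial (Fin 3) R) :
    ∃ A B C : Polynomial R, p - (toMvPolynomial (0 : Fin 3) A + toMvPolynomial (0 : Fin 3) B * X 1
      + toMvPolynomial (0 : Fin 3) C * X 2) ∈ I := by
  let π := Ideal.Quotient.mkₐ R I
  have hπ : ∀ {a b}, a - b ∈ I → π a = π b := fun h => Ideal.Quotient.eq.mpr h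
  obtain ⟨A, B, C, h⟩ := exists_aeval_eq_of_relations (fun i => π (X i))
    (by simpa using hπ h₁) (by simpa using hπ h₂) (by simpa using hπ h₃) p
  refine ⟨A, B, C, Ideal.Quotient.eq.mp ?_⟩
  rw [← comp_aeval_apply, aeval_X_left_apply] at h
  simp only [Polynomial.aeval_algHom_apply, ← map_mul, ← map_add] at h
  exact h

end NormalForm

section MonomialCurve

variable {R : Type*} [CommSemiring R]
open Polynomial (toMvPolynomial expand)

theorem eq_zero_of_aeval_monomialCurve_eq_zero {A B C : Polynomial R}
    (h : aeval (![Polynomial.X ^ 3, Polynomial.X ^ 4, Polynomial.X ^ 5] : Fin 3 → Polynomial R)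
      (toMvPolynomial (0 : Fin 3) A + toMvPolynomial (0 : Fin 3) B * X 1
        + toMvPolynomial (0 : Fin 3) C * X 2) = 0) :
    A = 0 ∧ B = 0 ∧ C = 0 := by
  have hsum : ∑ i : Fin 3, Polynomial.X ^ (i : ℕ) *
      expand R 3 (![A, Polynomial.X * B, Polynomial.X * C] i) = 0 := by
    rw [← h]
    simp only [Fin.sum_univ_three, Fin.val_zero, Fin.val_one, Fin.val_two, Matrix.cons_val_zero,
      Matrix.cons_val_one, Matrix.cons_val_two, map_add, map_mul, aeval_X, aeval_toMvPolynomial,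
      Matrix.tail_cons, Matrix.head_cons, Polynomial.expand_X, Polynomial.aeval_X_pow_eq_expand]
    ring
  have hf := Polynomial.eq_zero_of_sum_X_pow_mul_expand_eq_zero hsum
  have hX : IsLeftRegular (Polynomial.X : Polynomial R) := Polynomial.isRegular_X.left
  refine ⟨by simpa using congrFun hf 0, ?_, ?_⟩
  · simpa [hX.mul_left_eq_zero_iff] using congrFun hf 1
  · simpa [hX.mul_left_eq_zero_iff] using congrFun hf 2

end MonomialCurve

/-- For `n = (3,4,5)`, the kernel of the ℂ-algebra homomorphism
`φ : ℂ[x,y,z] → ℂ[t]` with `φ(x) = t³`, `φ(y) = t⁴`, `φ(z) = t⁵` is the ideal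
`I = (y² − xz, x³ − yz, z² − x²y)`. -/
theorem kernel_345 :
    RingHom.ker (MvPolynomial.aeval
        (![Polynomial.X ^ 3, Polynomial.X ^ 4, Polynomial.X ^ 5] :
          Fin 3 → Polynomial ℂ)) =
      Ideal.span ({X 1 ^ 2 - X 0 * X 2, X 0 ^ 3 - X 1 * X 2, X 2 ^ 2 - X 0 ^ 2 * X 1} :
        Set (MvPolynomial (Fin 3) ℂ)) := by
  set I := Ideal.span ({X 1 ^ 2 - X 0 * X 2, X 0 ^ 3 - X 1 * X 2, X 2 ^ 2 - X 0 ^ 2 * X 1} :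
    Set (MvPolynomial (Fin 3) ℂ))
  have hI : I ≤ RingHom.ker (aeval
      (![Polynomial.X ^ 3, Polynomial.X ^ 4, Polynomial.X ^ 5] : Fin 3 → Polynomial ℂ)) := by
    rw [Ideal.span_le]
    rintro q (rfl | rfl | rfl) <;>
      simp only [SetLike.mem_coe, RingHom.mem_ker, map_sub, map_mul, map_pow, aeval_X,
        Matrix.cons_val_zero, Matrix.cons_val_one, Matrix.cons_val_two, Matrix.tail_cons,
        Matrix.head_cons] <;>
      ring
  refine le_antisymm (fun p hp => ?_) hI
  obtain ⟨A, B, C, hpI⟩ := exists_sub_mem_of_relations I (Ideal.subset_span (by simp))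
    (Ideal.subset_span (by simp)) (Ideal.subset_span (by simp)) p
  have hnormal := hI hpI
  rw [RingHom.mem_ker, map_sub, RingHom.mem_ker.mp hp, zero_sub, neg_eq_zero] at hnormal
  obtain ⟨rfl, rfl, rfl⟩ := eq_zero_of_aeval_monomialCurve_eq_zero hnormal
  simpa using hpI
end

section
/- A lattice vector m ∈ ℤ³ lies in the real cone spanned by (3,4,5) and (0,1,2) (i.e., m = a·(3,4,5) + b·(0,1,2) for some real a, b ≥ 0) if and only if m is an ℕ-linear combination of the four vectors (3,4,5), (2,3,4), (1,2,3), (0,1,2). In other words, the monoid of lattice points of the cone σ_{x³} is generated by these four vectors. -/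
/-- A lattice vector `m ∈ ℤ³` lies in the real cone spanned by
`(3,4,5)` and `(0,1,2)` if and only if `m` is an ℕ-linear combination of
`(3,4,5)`, `(2,3,4)`, `(1,2,3)`, `(0,1,2)`: the monoid of lattice points of the
cone `σ_{x³}` is generated by these four vectors. -/
theorem lattice_points_cone_x3 (m : Fin 3 → ℤ) :
    (∃ a b : ℝ, 0 ≤ a ∧ 0 ≤ b ∧
        (fun i => (m i : ℝ)) = a • (![3, 4, 5] : Fin 3 → ℝ) + b • (![0, 1, 2] : Fin 3 → ℝ)) ↔
      ∃ c₁ c₂ c₃ c₄ : ℕ,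
        m = c₁ • (![3, 4, 5] : Fin 3 → ℤ) + c₂ • (![2, 3, 4] : Fin 3 → ℤ) +
            c₃ • (![1, 2, 3] : Fin 3 → ℤ) + c₄ • (![0, 1, 2] : Fin 3 → ℤ) := by
  constructor
  · rintro ⟨a, b, ha, hb, h⟩
    have h0 := congrFun h 0
    have h1 := congrFun h 1
    have h2 := congrFun h 2
    simp [Pi.add_apply, Pi.smul_apply, smul_eq_mul] at h0 h1 h2
    have hm0 : (0:ℤ) ≤ m 0 := by
      have : (0:ℝ) ≤ (m 0 : ℝ) := by rw [h0]; linarith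
      exact_mod_cast this
    have h40 : 4 * m 0 ≤ 3 * m 1 := by
      have : (4:ℝ) * (m 0 : ℝ) ≤ 3 * (m 1 : ℝ) := by rw [h0, h1]; linarith
      exact_mod_cast this
    have hm2 : m 2 = 2 * m 1 - m 0 := by
      have : (m 2 : ℝ) = 2 * (m 1 : ℝ) - (m 0 : ℝ) := by rw [h0, h1, h2]; ring
      exact_mod_cast this
    refine ⟨(m 0 / 3).toNat, (m 0 % 3 / 2).toNat, (m 0 % 3 % 2).toNat,
      (m 1 - 4 * (m 0 / 3) - 3 * (m 0 % 3 / 2) - 2 * (m 0 % 3 % 2)).toNat, ?_⟩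
    funext i
    fin_cases i <;>
      simp [Pi.add_apply, Pi.smul_apply, smul_eq_mul] <;> omega
  · rintro ⟨c₁, c₂, c₃, c₄, rfl⟩
    refine ⟨(c₁ : ℝ) + (2 * c₂ + c₃) / 3, ((c₂ : ℝ) + 2 * c₃ + 3 * c₄) / 3, by positivity,
      by positivity, ?_⟩
    funext i
    fin_cases i <;>
      simp [Pi.add_apply, Pi.smul_apply, smul_eq_mul] <;> ring
end

section
/- A lattice vector m ∈ ℤ³ lies in the real cone spanned by (2,1,0) and (3,4,5) (i.e., m = a·(2,1,0) + b·(3,4,5) for some real a, b ≥ 0) if and only if m is an ℕ-linear combination of the three vectors (2,1,0), (1,1,1), (3,4,5). In other words, the monoid of lattice points of the cone σ_{yz} is generated by these three vectors. -/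
/-- A lattice vector `m ∈ ℤ³` lies in the real cone spanned by
`(2,1,0)` and `(3,4,5)` if and only if `m` is an ℕ-linear combination of
`(2,1,0)`, `(1,1,1)`, `(3,4,5)`: the monoid of lattice points of the cone
`σ_{yz}` is generated by these three vectors. -/
theorem lattice_points_cone_yz (m : Fin 3 → ℤ) :
    (∃ a b : ℝ, 0 ≤ a ∧ 0 ≤ b ∧
        (fun i => (m i : ℝ)) = a • (![2, 1, 0] : Fin 3 → ℝ) + b • (![3, 4, 5] : Fin 3 → ℝ)) ↔
      ∃ c₁ c₂ c₃ : ℕ,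
        m = c₁ • (![2, 1, 0] : Fin 3 → ℤ) + c₂ • (![1, 1, 1] : Fin 3 → ℤ) +
            c₃ • (![3, 4, 5] : Fin 3 → ℤ) := by
  constructor
  · rintro ⟨a, b, ha, hb, h⟩
    have h0 := congrFun h 0
    have h1 := congrFun h 1
    have h2 := congrFun h 2
    simp [Matrix.cons_val_zero, Matrix.cons_val_one, Matrix.head_cons] at h0 h1 h2
    -- h0 : m 0 = 2a + 3b, h1 : m 1 = a + 4b, h2 : m 2 = 5b
    have hz : (0:ℤ) ≤ m 2 := by
      have : (0:ℝ) ≤ (m 2 : ℝ) := by nlinarith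
      exact_mod_cast this
    have hy : 4 * m 2 ≤ 5 * m 1 := by
      have : (4:ℝ) * (m 2 : ℝ) ≤ 5 * (m 1 : ℝ) := by nlinarith
      exact_mod_cast this
    have hx : m 0 = 2 * m 1 - m 2 := by
      have : (m 0 : ℝ) = 2 * (m 1 : ℝ) - (m 2 : ℝ) := by nlinarith
      exact_mod_cast this
    have hA : 0 ≤ m 1 - m 2 + m 2 / 5 := by omega
    have hB : 0 ≤ m 2 % 5 := by omega
    have hC : 0 ≤ m 2 / 5 := by omega
    refine ⟨(m 1 - m 2 + m 2 / 5).toNat, (m 2 % 5).toNat, (m 2 / 5).toNat, ?_⟩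
    funext i
    fin_cases i <;>
      simp only [Pi.add_apply, Pi.smul_apply, Pi.mul_apply, Pi.natCast_apply, smul_eq_mul, nsmul_eq_mul,
        Fin.mk_zero, Fin.mk_one, Fin.isValue, Fin.reduceFinMk,
        Matrix.cons_val_zero, Matrix.cons_val_one, Matrix.head_cons,
        Matrix.cons_val_fin_one, Matrix.cons_val_two, Matrix.tail_cons,
        Int.toNat_of_nonneg hA, Int.toNat_of_nonneg hB, Int.toNat_of_nonneg hC] <;>
      omega
  · rintro ⟨c₁, c₂, c₃, h⟩
    refine ⟨c₁ + c₂ / 5, c₃ + c₂ / 5, by positivity, by positivity, ?_⟩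
    have h0 := congrFun h 0
    have h1 := congrFun h 1
    have h2 := congrFun h 2
    simp [Matrix.cons_val_zero, Matrix.cons_val_one, Matrix.head_cons] at h0 h1 h2
    funext i
    fin_cases i <;>
      simp [Matrix.cons_val_zero, Matrix.cons_val_one, Matrix.head_cons, h0, h1, h2] <;>
      ring
end
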